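/- Let M̄ = (M₀, M₁, d_{M₀}, d_{M₁}) be a matrix factorization with potential ω ∈ R and N̄ = (N₀, N₁, d_{N₀}, d_{N₁}) a matrix factorization with potential ω′ ∈ R over the same commutative ring R. Define the tensor product M̄ ⊠ N̄ with degree-0 part M₀⊗N₀ ⊕ M₁⊗N₁, degree-1 part M₁⊗N₀ ⊕ M₀⊗N₁, and differentials given by the matrices ((d_{M₀}⊗1, -1⊗d_{N₁}), (1⊗d_{N₀}, d_{M₁}⊗1)) and ((d_{M₁}⊗1, 1⊗d_{N₁}), (-1⊗d_{N₀}, d_{M₀}⊗1)). Then M̄ ⊠ N̄ is a matrix factorization with potential ω + ω′. -/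

import Mathlib

/-!
Both composites are block matrices whose diagonal entries are sums `(d_M ⊗ 1)² + (1 ⊗ d_N)²`,
i.e. `ω + ω'`, while each off-diagonal entry is a difference of `(d_M ⊗ 1)(1 ⊗ d_N)` and
`(1 ⊗ d_N)(d_M ⊗ 1)`; these two operators commute, so the signs make the entries vanish.
-/

open TensorProduct

/-- Degree-0 differential of the tensor product `M̄ ⊠ N̄` of matrix factorizations,
given by the matrix ((d_{M₀}⊗1, -1⊗d_{N₁}), (1⊗d_{N₀}, d_{M₁}⊗1)). -/
noncomputable def tensD0 (R : Type*) [CommRing R]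
    (M0 M1 N0 N1 : Type*) [AddCommGroup M0] [AddCommGroup M1] [AddCommGroup N0]
    [AddCommGroup N1] [Module R M0] [Module R M1] [Module R N0] [Module R N1]
    (dM0 : M0 →ₗ[R] M1) (dM1 : M1 →ₗ[R] M0) (dN0 : N0 →ₗ[R] N1) (dN1 : N1 →ₗ[R] N0) :
    (M0 ⊗[R] N0) × (M1 ⊗[R] N1) →ₗ[R] (M1 ⊗[R] N0) × (M0 ⊗[R] N1) :=
  LinearMap.prod
    ((TensorProduct.map dM0 LinearMap.id) ∘ₗ (LinearMap.fst R _ _)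
      - (TensorProduct.map LinearMap.id dN1) ∘ₗ (LinearMap.snd R _ _))
    ((TensorProduct.map LinearMap.id dN0) ∘ₗ (LinearMap.fst R _ _)
      + (TensorProduct.map dM1 LinearMap.id) ∘ₗ (LinearMap.snd R _ _))

/-- Degree-1 differential of the tensor product `M̄ ⊠ N̄` of matrix factorizations,
given by the matrix ((d_{M₁}⊗1, 1⊗d_{N₁}), (-1⊗d_{N₀}, d_{M₀}⊗1)). -/
noncomputable def tensD1 (R : Type*) [CommRing R]
    (M0 M1 N0 N1 : Type*) [AddCommGroup M0] [AddCommGroup M1] [AddCommGroup N0]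
    [AddCommGroup N1] [Module R M0] [Module R M1] [Module R N0] [Module R N1]
    (dM0 : M0 →ₗ[R] M1) (dM1 : M1 →ₗ[R] M0) (dN0 : N0 →ₗ[R] N1) (dN1 : N1 →ₗ[R] N0) :
    (M1 ⊗[R] N0) × (M0 ⊗[R] N1) →ₗ[R] (M0 ⊗[R] N0) × (M1 ⊗[R] N1) :=
  LinearMap.prod
    ((TensorProduct.map dM1 LinearMap.id) ∘ₗ (LinearMap.fst R _ _)
      + (TensorProduct.map LinearMap.id dN1) ∘ₗ (LinearMap.snd R _ _))
    ((TensorProduct.map dM0 LinearMap.id) ∘ₗ (LinearMap.snd R _ _)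
      - (TensorProduct.map LinearMap.id dN0) ∘ₗ (LinearMap.fst R _ _))


namespace LinearMap

variable {R M M' N N' : Type*} [CommSemiring R] [AddCommMonoid M] [AddCommMonoid M']
  [AddCommMonoid N] [AddCommMonoid N'] [Module R M] [Module R M'] [Module R N] [Module R N']

theorem rTensor_rTensor_of_comp_eq_smul_id {f : M →ₗ[R] M'} {g : M' →ₗ[R] M} {a : R}
    (h : g ∘ₗ f = a • id) (x : M ⊗[R] N) : g.rTensor N (f.rTensor N x) = a • x := by
  rw [← rTensor_comp_apply, h, rTensor_smul, rTensor_id, smul_apply, id_apply]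

theorem lTensor_lTensor_of_comp_eq_smul_id {f : N →ₗ[R] N'} {g : N' →ₗ[R] N} {a : R}
    (h : g ∘ₗ f = a • id) (x : M ⊗[R] N) : g.lTensor M (f.lTensor M x) = a • x := by
  rw [← lTensor_comp_apply, h, lTensor_smul, lTensor_id, smul_apply, id_apply]

theorem rTensor_lTensor_comm (f : M →ₗ[R] M') (g : N →ₗ[R] N') (x : M ⊗[R] N) :
    f.rTensor N' (g.lTensor M x) = g.lTensor M' (f.rTensor N x) := by
  rw [← comp_apply, ← comp_apply, rTensor_comp_lTensor, lTensor_comp_rTensor]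

end LinearMap

section

variable {R : Type*} [CommRing R] {M0 M1 N0 N1 : Type*} [AddCommGroup M0] [AddCommGroup M1]
  [AddCommGroup N0] [AddCommGroup N1] [Module R M0] [Module R M1] [Module R N0] [Module R N1]
  (dM0 : M0 →ₗ[R] M1) (dM1 : M1 →ₗ[R] M0) (dN0 : N0 →ₗ[R] N1) (dN1 : N1 →ₗ[R] N0)

theorem tensD0_apply (x : (M0 ⊗[R] N0) × (M1 ⊗[R] N1)) :
    tensD0 R M0 M1 N0 N1 dM0 dM1 dN0 dN1 x =
      (dM0.rTensor N0 x.1 - dN1.lTensor M1 x.2, dN0.lTensor M0 x.1 + dM1.rTensor N1 x.2) :=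
  rfl

theorem tensD1_apply (x : (M1 ⊗[R] N0) × (M0 ⊗[R] N1)) :
    tensD1 R M0 M1 N0 N1 dM0 dM1 dN0 dN1 x =
      (dM1.rTensor N0 x.1 + dN1.lTensor M0 x.2, dM0.rTensor N1 x.2 - dN0.lTensor M1 x.1) :=
  rfl

end

/-- The tensor product `M̄ ⊠ N̄` of a matrix factorization with potential `ω`
and one with potential `ω′` is a matrix factorization with potential `ω + ω′`. -/
theorem tensor_product_is_matrix_factorization
    {R : Type*} [CommRing R] (ω ω' : R)
    {M0 M1 N0 N1 : Type*} [AddCommGroup M0] [AddCommGroup M1] [AddCommGroup N0]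
    [AddCommGroup N1] [Module R M0] [Module R M1] [Module R N0] [Module R N1]
    (dM0 : M0 →ₗ[R] M1) (dM1 : M1 →ₗ[R] M0) (dN0 : N0 →ₗ[R] N1) (dN1 : N1 →ₗ[R] N0)
    (hM10 : dM1 ∘ₗ dM0 = ω • (LinearMap.id : M0 →ₗ[R] M0))
    (hM01 : dM0 ∘ₗ dM1 = ω • (LinearMap.id : M1 →ₗ[R] M1))
    (hN10 : dN1 ∘ₗ dN0 = ω' • (LinearMap.id : N0 →ₗ[R] N0))
    (hN01 : dN0 ∘ₗ dN1 = ω' • (LinearMap.id : N1 →ₗ[R] N1)) :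
    tensD1 R M0 M1 N0 N1 dM0 dM1 dN0 dN1 ∘ₗ tensD0 R M0 M1 N0 N1 dM0 dM1 dN0 dN1
      = (ω + ω') • LinearMap.id ∧
    tensD0 R M0 M1 N0 N1 dM0 dM1 dN0 dN1 ∘ₗ tensD1 R M0 M1 N0 N1 dM0 dM1 dN0 dN1
      = (ω + ω') • LinearMap.id := by
  refine ⟨LinearMap.ext fun ⟨x, y⟩ => ?_, LinearMap.ext fun ⟨x, y⟩ => ?_⟩ <;>
    simp only [LinearMap.comp_apply, tensD0_apply, tensD1_apply, map_add, map_sub,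
      LinearMap.rTensor_rTensor_of_comp_eq_smul_id hM10,
      LinearMap.rTensor_rTensor_of_comp_eq_smul_id hM01,
      LinearMap.lTensor_lTensor_of_comp_eq_smul_id hN10,
      LinearMap.lTensor_lTensor_of_comp_eq_smul_id hN01,
      LinearMap.rTensor_lTensor_comm, LinearMap.smul_apply, LinearMap.id_apply, Prod.smul_mk,
      Prod.mk.injEq] <;>
    constructor <;> module
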